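/- arXiv:2106.10407 — 4 statements merged into one kernel-verified Lean document; each statement's English description precedes it below -/
import Mathlib

section
/- The discrete Gini coefficient satisfies the regressive tax property: if q̃_g = δ_g q_g with all δ_g > 0 and δ_g ≤ δ_{g'} whenever q_g ≤ q_{g'}, then W(q̃) ≥ W(q). -/
/-- Sorted-case core inequality. -/
lemma key_sorted (x y z a b c : ℝ) (hx : 0 ≤ x) (hxy : x ≤ y) (hyz : y ≤ z)
    (ha : 0 ≤ a) (hab : a ≤ b) (hbc : b ≤ c) :
    |x - y| * (c * z) + |y - z| * (a * x) + |z - x| * (b * y) ≤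
      |a * x - b * y| * z + |b * y - c * z| * x + |c * z - a * x| * y := by
  have h1 : a * x ≤ b * y := mul_le_mul hab hxy hx (ha.trans hab)
  have h2 : b * y ≤ c * z := mul_le_mul hbc hyz (hx.trans hxy) ((ha.trans hab).trans hbc)
  rw [abs_of_nonpos (by linarith), abs_of_nonpos (by linarith), abs_of_nonneg (by linarith),
      abs_of_nonpos (by linarith), abs_of_nonpos (by linarith), abs_of_nonneg (by linarith)]
  nlinarith [mul_nonneg (mul_nonneg (sub_nonneg.2 (hab.trans hbc)) hx)
      (hx.trans (hxy.trans hyz))]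

/-- Rotation of a triple sum. -/
lemma rot {G : Type*} [Fintype G] (f : G → G → G → ℝ) :
    (∑ x : G, ∑ y : G, ∑ z : G, f y z x) = ∑ x : G, ∑ y : G, ∑ z : G, f x y z := by
  rw [Finset.sum_comm]
  exact Finset.sum_congr rfl fun y _ => Finset.sum_comm

/-- The symmetrized pointwise inequality. -/
lemma G_ineq {G : Type*} [Fintype G] (q δ : G → ℝ) (hq : ∀ g, 0 < q g) (hδ : ∀ g, 0 < δ g)
    (hmono : ∀ g g', q g ≤ q g' → δ g ≤ δ g') (a b c : G) :
    |q a - q b| * (δ c * q c) + |q b - q c| * (δ a * q a) + |q c - q a| * (δ b * q b) ≤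
      |δ a * q a - δ b * q b| * q c + |δ b * q b - δ c * q c| * q a +
        |δ c * q c - δ a * q a| * q b := by
  rcases le_total (q a) (q b) with h1 | h1 <;> rcases le_total (q b) (q c) with h2 | h2 <;>
    rcases le_total (q a) (q c) with h3 | h3
  · have hk := key_sorted (q a) (q b) (q c) (δ a) (δ b) (δ c) (hq a).le h1 h2 (hδ a).le
      (hmono _ _ h1) (hmono _ _ h2)
    simp only [abs_sub_comm (q b) (q a), abs_sub_comm (q c) (q b), abs_sub_comm (q c) (q a),
      abs_sub_comm (δ b * q b) (δ a * q a), abs_sub_comm (δ c * q c) (δ b * q b),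
      abs_sub_comm (δ c * q c) (δ a * q a)] at hk ⊢
    linarith
  · have hk := key_sorted (q a) (q b) (q c) (δ a) (δ b) (δ c) (hq a).le h1 h2 (hδ a).le
      (hmono _ _ h1) (hmono _ _ h2)
    simp only [abs_sub_comm (q b) (q a), abs_sub_comm (q c) (q b), abs_sub_comm (q c) (q a),
      abs_sub_comm (δ b * q b) (δ a * q a), abs_sub_comm (δ c * q c) (δ b * q b),
      abs_sub_comm (δ c * q c) (δ a * q a)] at hk ⊢
    linarith
  · have hk := key_sorted (q a) (q c) (q b) (δ a) (δ c) (δ b) (hq a).le h3 h2 (hδ a).le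
      (hmono _ _ h3) (hmono _ _ h2)
    simp only [abs_sub_comm (q b) (q a), abs_sub_comm (q c) (q b), abs_sub_comm (q c) (q a),
      abs_sub_comm (δ b * q b) (δ a * q a), abs_sub_comm (δ c * q c) (δ b * q b),
      abs_sub_comm (δ c * q c) (δ a * q a)] at hk ⊢
    linarith
  · have hk := key_sorted (q c) (q a) (q b) (δ c) (δ a) (δ b) (hq c).le h3 h1 (hδ c).le
      (hmono _ _ h3) (hmono _ _ h1)
    simp only [abs_sub_comm (q b) (q a), abs_sub_comm (q c) (q b), abs_sub_comm (q c) (q a),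
      abs_sub_comm (δ b * q b) (δ a * q a), abs_sub_comm (δ c * q c) (δ b * q b),
      abs_sub_comm (δ c * q c) (δ a * q a)] at hk ⊢
    linarith
  · have hk := key_sorted (q b) (q a) (q c) (δ b) (δ a) (δ c) (hq b).le h1 h3 (hδ b).le
      (hmono _ _ h1) (hmono _ _ h3)
    simp only [abs_sub_comm (q b) (q a), abs_sub_comm (q c) (q b), abs_sub_comm (q c) (q a),
      abs_sub_comm (δ b * q b) (δ a * q a), abs_sub_comm (δ c * q c) (δ b * q b),
      abs_sub_comm (δ c * q c) (δ a * q a)] at hk ⊢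
    linarith
  · have hk := key_sorted (q b) (q c) (q a) (δ b) (δ c) (δ a) (hq b).le h2 h3 (hδ b).le
      (hmono _ _ h2) (hmono _ _ h3)
    simp only [abs_sub_comm (q b) (q a), abs_sub_comm (q c) (q b), abs_sub_comm (q c) (q a),
      abs_sub_comm (δ b * q b) (δ a * q a), abs_sub_comm (δ c * q c) (δ b * q b),
      abs_sub_comm (δ c * q c) (δ a * q a)] at hk ⊢
    linarith
  · have hk := key_sorted (q c) (q b) (q a) (δ c) (δ b) (δ a) (hq c).le h2 h1 (hδ c).le
      (hmono _ _ h2) (hmono _ _ h1)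
    simp only [abs_sub_comm (q b) (q a), abs_sub_comm (q c) (q b), abs_sub_comm (q c) (q a),
      abs_sub_comm (δ b * q b) (δ a * q a), abs_sub_comm (δ c * q c) (δ b * q b),
      abs_sub_comm (δ c * q c) (δ a * q a)] at hk ⊢
    linarith
  · have hk := key_sorted (q c) (q b) (q a) (δ c) (δ b) (δ a) (hq c).le h2 h1 (hδ c).le
      (hmono _ _ h2) (hmono _ _ h1)
    simp only [abs_sub_comm (q b) (q a), abs_sub_comm (q c) (q b), abs_sub_comm (q c) (q a),
      abs_sub_comm (δ b * q b) (δ a * q a), abs_sub_comm (δ c * q c) (δ b * q b),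
      abs_sub_comm (δ c * q c) (δ a * q a)] at hk ⊢
    linarith

/-- The key cross-multiplied inequality between the two Gini numerators. -/
lemma gini_key {G : Type*} [Fintype G] (d q δ : G → ℝ)
    (hd : ∀ g, 0 < d g) (hq : ∀ g, 0 < q g) (hδ : ∀ g, 0 < δ g)
    (hmono : ∀ g g', q g ≤ q g' → δ g ≤ δ g') :
    (∑ g₁, ∑ g₂, d g₁ * d g₂ * |q g₁ - q g₂|) * ∑ g, (δ g * q g) * d g ≤
      (∑ g₁, ∑ g₂, d g₁ * d g₂ * |δ g₁ * q g₁ - δ g₂ * q g₂|) * ∑ g, q g * d g := by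
  have expand : ∀ r s : G → ℝ,
      (∑ g₁, ∑ g₂, d g₁ * d g₂ * |r g₁ - r g₂|) * ∑ g, s g * d g
        = ∑ a, ∑ b, ∑ c, d a * d b * d c * (|r a - r b| * s c) := by
    intro r s
    rw [Finset.sum_mul]
    refine Finset.sum_congr rfl fun a _ => ?_
    rw [Finset.sum_mul]
    refine Finset.sum_congr rfl fun b _ => ?_
    rw [Finset.mul_sum]
    exact Finset.sum_congr rfl fun c _ => by ring
  rw [expand, expand]
  set P : G → G → G → ℝ := fun a b c => d a * d b * d c * (|q a - q b| * (δ c * q c)) with hP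
  set Q : G → G → G → ℝ := fun a b c => d a * d b * d c * (|δ a * q a - δ b * q b| * q c) with hQ
  have hpt : ∀ a b c : G, P a b c + P b c a + P c a b ≤ Q a b c + Q b c a + Q c a b := by
    intro a b c
    have h := G_ineq q δ hq hδ hmono a b c
    have hdp : (0:ℝ) ≤ d a * d b * d c := le_of_lt (mul_pos (mul_pos (hd a) (hd b)) (hd c))
    have := mul_le_mul_of_nonneg_left h hdp
    simp only [hP, hQ]
    nlinarith [this]
  have h3 : (3:ℝ) * (∑ a, ∑ b, ∑ c, P a b c) ≤ 3 * ∑ a, ∑ b, ∑ c, Q a b c := by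
    have eP : (3:ℝ) * (∑ a, ∑ b, ∑ c, P a b c)
        = ∑ a, ∑ b, ∑ c, (P a b c + P b c a + P c a b) := by
      simp only [Finset.sum_add_distrib]
      rw [rot (fun a b c => P a b c), rot (fun a b c => P c a b)]
      ring
    have eQ : (3:ℝ) * (∑ a, ∑ b, ∑ c, Q a b c)
        = ∑ a, ∑ b, ∑ c, (Q a b c + Q b c a + Q c a b) := by
      simp only [Finset.sum_add_distrib]
      rw [rot (fun a b c => Q a b c), rot (fun a b c => Q c a b)]
      ring
    rw [eP, eQ]
    refine Finset.sum_le_sum fun a _ => Finset.sum_le_sum fun b _ => Finset.sum_le_sum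
      fun c _ => hpt a b c
  linarith

/-- The discrete Gini coefficient with group sizes `d` and incomes `q`. -/
noncomputable def gini {G : Type*} [Fintype G] (d q : G → ℝ) : ℝ :=
  (1 / (2 * (∑ g, d g) ^ 2 * ((∑ g, q g * d g) / (∑ g, d g)))) *
    ∑ g₁, ∑ g₂, d g₁ * d g₂ * |q g₁ - q g₂|

/-- the discrete Gini coefficient satisfies the regressive tax
property. -/
theorem gini_regressive_tax
    {G : Type*} [Fintype G] [Nonempty G] (d q δ : G → ℝ)
    (hd : ∀ g, 0 < d g) (hq : ∀ g, 0 < q g) (hδ : ∀ g, 0 < δ g)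
    (hmono : ∀ g g', q g ≤ q g' → δ g ≤ δ g') :
    gini d q ≤ gini d (fun g => δ g * q g) := by
  have hD : (0:ℝ) < ∑ g, d g := Finset.sum_pos (fun g _ => hd g) Finset.univ_nonempty
  have hSq : (0:ℝ) < ∑ g, q g * d g :=
    Finset.sum_pos (fun g _ => mul_pos (hq g) (hd g)) Finset.univ_nonempty
  have hSqt : (0:ℝ) < ∑ g, (δ g * q g) * d g :=
    Finset.sum_pos (fun g _ => mul_pos (mul_pos (hδ g) (hq g)) (hd g)) Finset.univ_nonempty
  have key := gini_key d q δ hd hq hδ hmono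
  simp only [gini]
  have e1 : 2 * (∑ g, d g) ^ 2 * ((∑ g, q g * d g) / (∑ g, d g))
      = 2 * (∑ g, d g) * (∑ g, q g * d g) := by
    field_simp
  have e2 : 2 * (∑ g, d g) ^ 2 * ((∑ g, (δ g * q g) * d g) / (∑ g, d g))
      = 2 * (∑ g, d g) * (∑ g, (δ g * q g) * d g) := by
    field_simp
  rw [e1, e2]
  rw [div_mul_eq_mul_div, div_mul_eq_mul_div, one_mul, one_mul]
  rw [div_le_div_iff₀ (by positivity) (by positivity)]
  nlinarith [mul_le_mul_of_nonneg_left key (show (0:ℝ) ≤ 2 * ∑ g, d g by positivity)]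
end

section
/- Existence of a Pareto improving CPRR refund: if C_τ ≤ C_0 and W is a wealth-inequality measure satisfying the constant income transfer property, then the refund r_g = μ_τ(g) − μ_0(g) + (C_0 − C_τ)/(Σ_g d_g) is user-favorable (μ_τ(g) − r_g ≤ μ_0(g) for all g) and satisfies W(q̂) ≤ W(q̃), where q̂ and q̃ are the CPRR and untolled ex-post income distributions. -/
/-- existence of a Pareto improving CPRR refund: the proportional
refund is user-favorable and does not increase wealth inequality. -/
theorem pareto_improving_cprr
    {G : Type*} [Fintype G] [Nonempty G]
    (d q0 μτ μ0 : G → ℝ) (Cτ C0 β : ℝ)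
    (hd : ∀ g, 0 < d g) (hC : Cτ ≤ C0) (hβ : 0 < β)
    (r qtilde qhat : G → ℝ)
    (hr : ∀ g, r g = μτ g - μ0 g + (C0 - Cτ) / (∑ g', d g'))
    (hqt : ∀ g, qtilde g = q0 g - β * μ0 g)
    (hqh : ∀ g, qhat g = q0 g - β * (μτ g - r g))
    (hqtpos : ∀ g, 0 < qtilde g)
    (W : (G → ℝ) → ℝ)
    (hW : ∀ (q : G → ℝ), (∀ g, 0 < q g) → ∀ lam : ℝ, 0 ≤ lam →
      W (fun g => q g + lam) ≤ W q) :
    (∀ g, μτ g - r g ≤ μ0 g) ∧ W qhat ≤ W qtilde := by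
  have hdsum : 0 < ∑ g', d g' := Finset.sum_pos (fun g _ => hd g) Finset.univ_nonempty
  have hlam : 0 ≤ (C0 - Cτ) / (∑ g', d g') := div_nonneg (by linarith) hdsum.le
  constructor
  · intro g
    rw [hr g]
    have : 0 ≤ (C0 - Cτ) / (∑ g', d g') := hlam
    linarith
  · have heq : qhat = fun g => qtilde g + β * ((C0 - Cτ) / (∑ g', d g')) := by
      funext g
      rw [hqh g, hqt g, hr g]
      ring
    rw [heq]
    exact hW qtilde hqtpos _ (mul_nonneg hβ.le hlam)
end

section
/- Optimality of water-filling for the unnormalized Gini objective: let q̃ : G → ℝ, d_g > 0, budget Z₀ ≥ 0, and let c* be a water-filling allocation, i.e., c*_g = max(L − q̃_g, 0) with Σ_g c*_g d_g = Z₀. Then for every c : G → ℝ with c_g ≥ 0 and Σ_g c_g d_g = Z₀, Σ_{g₁,g₂} d_{g₁} d_{g₂} |q̃_{g₁} + c*_{g₁} − q̃_{g₂} − c*_{g₂}| ≤ Σ_{g₁,g₂} d_{g₁} d_{g₂} |q̃_{g₁} + c_{g₁} − q̃_{g₂} − c_{g₂}|. -/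
noncomputable def wfMu (a b : ℝ) : ℝ := if a < b then 1 else if b < a then -1 else 0

lemma wfMu_antisymm (a b : ℝ) : wfMu b a = - wfMu a b := by
  unfold wfMu
  split_ifs <;> linarith

lemma wfMu_anti {s t : ℝ} (h : s ≤ t) (b : ℝ) : wfMu t b ≤ wfMu s b := by
  unfold wfMu; split_ifs <;> linarith

lemma wfMu_abs (a b a' b' : ℝ) :
    |a' - b'| ≤ |a - b| + wfMu a' b' * ((a - a') - (b - b')) := by
  unfold wfMu
  rcases lt_trichotomy a' b' with h | h | h
  · rw [if_pos h, abs_of_neg (by linarith : a' - b' < 0)]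
    have := neg_abs_le (a - b); linarith
  · rw [if_neg (by simp [h]), if_neg (by simp [h]), h, sub_self, abs_zero]
    have := abs_nonneg (a - b); linarith
  · rw [if_neg (not_lt_of_gt h), if_pos h, abs_of_pos (by linarith : 0 < a' - b')]
    have := le_abs_self (a - b); linarith

lemma key_ineq {G : Type*} [Fintype G] (d Ys Y : G → ℝ) (hd : ∀ g, 0 < d g) (L : ℝ)
    (hYsL : ∀ g, L ≤ Ys g) (hpos : ∀ g, L < Ys g → Ys g ≤ Y g)
    (hsum0 : ∑ g, d g * (Y g - Ys g) = 0) :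
    ∑ g₁, ∑ g₂, d g₁ * d g₂ * |Ys g₁ - Ys g₂|
      ≤ ∑ g₁, ∑ g₂, d g₁ * d g₂ * |Y g₁ - Y g₂| := by
  set B : G → ℝ := fun g => ∑ h, d h * wfMu (Ys g) (Ys h) with hBdef
  set B0 : ℝ := ∑ h, d h * wfMu L (Ys h) with hB0def
  have hB : ∀ g, d g * (Y g - Ys g) * B g ≤ d g * (Y g - Ys g) * B0 := by
    intro g
    rcases eq_or_lt_of_le (hYsL g) with h | h
    · simp [hBdef, hB0def, ← h]
    · have h1 : B g ≤ B0 :=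
        Finset.sum_le_sum (fun h' _ =>
          mul_le_mul_of_nonneg_left (wfMu_anti (le_of_lt h) _) (hd h').le)
      have h2 : 0 ≤ d g * (Y g - Ys g) :=
        mul_nonneg (hd g).le (by have := hpos g h; linarith)
      exact mul_le_mul_of_nonneg_left h1 h2
  have hT : ∑ g, d g * (Y g - Ys g) * B g ≤ 0 := by
    calc ∑ g, d g * (Y g - Ys g) * B g ≤ ∑ g, d g * (Y g - Ys g) * B0 :=
          Finset.sum_le_sum (fun g _ => hB g)
      _ = (∑ g, d g * (Y g - Ys g)) * B0 := by rw [Finset.sum_mul]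
      _ = 0 := by rw [hsum0, zero_mul]
  have key : ∑ g₁, ∑ g₂, d g₁ * d g₂ *
        (wfMu (Ys g₁) (Ys g₂) * ((Y g₁ - Ys g₁) - (Y g₂ - Ys g₂)))
      = 2 * ∑ g, d g * (Y g - Ys g) * B g := by
    have point : ∀ g₁ g₂ : G, d g₁ * d g₂ *
          (wfMu (Ys g₁) (Ys g₂) * ((Y g₁ - Ys g₁) - (Y g₂ - Ys g₂)))
        = d g₁ * (Y g₁ - Ys g₁) * (d g₂ * wfMu (Ys g₁) (Ys g₂))
          + d g₂ * (Y g₂ - Ys g₂) * (d g₁ * wfMu (Ys g₂) (Ys g₁)) := by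
      intro g₁ g₂
      rw [wfMu_antisymm (Ys g₁) (Ys g₂)]
      ring
    calc ∑ g₁, ∑ g₂, d g₁ * d g₂ *
          (wfMu (Ys g₁) (Ys g₂) * ((Y g₁ - Ys g₁) - (Y g₂ - Ys g₂)))
        = ∑ g₁, ∑ g₂, (d g₁ * (Y g₁ - Ys g₁) * (d g₂ * wfMu (Ys g₁) (Ys g₂))
            + d g₂ * (Y g₂ - Ys g₂) * (d g₁ * wfMu (Ys g₂) (Ys g₁))) := by
          exact Finset.sum_congr rfl (fun g₁ _ => Finset.sum_congr rfl (fun g₂ _ => point g₁ g₂))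
      _ = (∑ g₁, ∑ g₂, d g₁ * (Y g₁ - Ys g₁) * (d g₂ * wfMu (Ys g₁) (Ys g₂)))
            + ∑ g₁, ∑ g₂, d g₂ * (Y g₂ - Ys g₂) * (d g₁ * wfMu (Ys g₂) (Ys g₁)) := by
          simp [Finset.sum_add_distrib]
      _ = (∑ g₁, ∑ g₂, d g₁ * (Y g₁ - Ys g₁) * (d g₂ * wfMu (Ys g₁) (Ys g₂)))
            + ∑ g₂, ∑ g₁, d g₂ * (Y g₂ - Ys g₂) * (d g₁ * wfMu (Ys g₂) (Ys g₁)) := by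
          rw [Finset.sum_comm]
      _ = 2 * ∑ g, d g * (Y g - Ys g) * B g := by
          rw [two_mul]
          congr 1 <;>
          · refine Finset.sum_congr rfl (fun g _ => ?_)
            rw [hBdef, ← Finset.mul_sum]
  have hcorr : ∑ g₁, ∑ g₂, d g₁ * d g₂ *
      (wfMu (Ys g₁) (Ys g₂) * ((Y g₁ - Ys g₁) - (Y g₂ - Ys g₂))) ≤ 0 := by
    rw [key]; linarith
  calc ∑ g₁, ∑ g₂, d g₁ * d g₂ * |Ys g₁ - Ys g₂|
      ≤ ∑ g₁, ∑ g₂, (d g₁ * d g₂ * |Y g₁ - Y g₂| + d g₁ * d g₂ *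
          (wfMu (Ys g₁) (Ys g₂) * ((Y g₁ - Ys g₁) - (Y g₂ - Ys g₂)))) := by
        refine Finset.sum_le_sum (fun g₁ _ => Finset.sum_le_sum (fun g₂ _ => ?_))
        have h := wfMu_abs (Y g₁) (Y g₂) (Ys g₁) (Ys g₂)
        have hdd : 0 ≤ d g₁ * d g₂ := mul_nonneg (hd g₁).le (hd g₂).le
        nlinarith [mul_le_mul_of_nonneg_left h hdd]
    _ = (∑ g₁, ∑ g₂, d g₁ * d g₂ * |Y g₁ - Y g₂|)
          + ∑ g₁, ∑ g₂, d g₁ * d g₂ *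
            (wfMu (Ys g₁) (Ys g₂) * ((Y g₁ - Ys g₁) - (Y g₂ - Ys g₂))) := by
        simp [Finset.sum_add_distrib]
    _ ≤ ∑ g₁, ∑ g₂, d g₁ * d g₂ * |Y g₁ - Y g₂| := by linarith

/-- optimality of water-filling for the unnormalized Gini
objective. -/
theorem waterfilling_optimal
    {G : Type*} [Fintype G] [Nonempty G]
    (d qtilde : G → ℝ) (hd : ∀ g, 0 < d g)
    (Z0 : ℝ) (hZ0 : 0 ≤ Z0) (L : ℝ)
    (cstar : G → ℝ) (hcstar : ∀ g, cstar g = max (L - qtilde g) 0)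
    (hbudget : ∑ g, cstar g * d g = Z0) :
    ∀ c : G → ℝ, (∀ g, 0 ≤ c g) → (∑ g, c g * d g = Z0) →
      ∑ g₁, ∑ g₂, d g₁ * d g₂ * |qtilde g₁ + cstar g₁ - (qtilde g₂ + cstar g₂)|
        ≤ ∑ g₁, ∑ g₂, d g₁ * d g₂ * |qtilde g₁ + c g₁ - (qtilde g₂ + c g₂)| := by
  intro c hc hcsum
  have hYsL : ∀ g, L ≤ qtilde g + cstar g := by
    intro g
    have h1 : L - qtilde g ≤ max (L - qtilde g) 0 := le_max_left _ _
    rw [hcstar g]; linarith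
  have hpos : ∀ g, L < qtilde g + cstar g → qtilde g + cstar g ≤ qtilde g + c g := by
    intro g hg
    rcases le_or_gt (L - qtilde g) 0 with h | h
    · have : cstar g = 0 := by rw [hcstar g]; exact max_eq_right h
      rw [this]; have := hc g; linarith
    · have : cstar g = L - qtilde g := by rw [hcstar g]; exact max_eq_left h.le
      rw [this] at hg; linarith
  have hsum0 : ∑ g, d g * ((qtilde g + c g) - (qtilde g + cstar g)) = 0 := by
    have h1 : ∑ g, d g * ((qtilde g + c g) - (qtilde g + cstar g))
        = ∑ g, (c g * d g - cstar g * d g) := by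
      refine Finset.sum_congr rfl (fun g _ => ?_); ring
    rw [h1, Finset.sum_sub_distrib, hcsum, hbudget, sub_self]
  exact key_ineq d (fun g => qtilde g + cstar g) (fun g => qtilde g + c g) hd L
    hYsL hpos hsum0
end

section
/- Optimal CPRR scheme exists: suppose there is a pricing scheme τ* achieving the minimum total system cost C* among all pricing schemes, and for each pricing scheme τ with C_τ ≤ C_0 let R(τ) denote the (nonempty) set of nonnegative transfer vectors c with Σ_g c_g d_g = C_0 − C_τ. If W satisfies the constant income transfer property, then there exists c* ∈ R(τ*) minimizing W(q̃ + β c) over c ∈ R(τ*), and for every pricing scheme τ with C_τ ≤ C_0 and every c ∈ R(τ), W(q̃ + β c*) ≤ W(q̃ + β c). -/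
/-- existence of an optimal CPRR scheme: a cost-minimizing
pricing scheme together with an inequality-minimizing transfer vector is
weakly better than any other feasible scheme-and-transfer pair. -/
theorem optimal_cprr_exists
    {G : Type*} [Fintype G] [Nonempty G]
    (d qtilde : G → ℝ) (hd : ∀ g, 0 < d g) (hqt : ∀ g, 0 < qtilde g)
    (β : ℝ) (hβ : 0 < β)
    {T : Type*} (C : T → ℝ) (C0 : ℝ) (τstar : T)
    (hstar : ∀ τ : T, C τstar ≤ C τ) (hC0 : C τstar ≤ C0)
    (W : (G → ℝ) → ℝ)
    (hWcont : ContinuousOn W {q : G → ℝ | ∀ g, 0 < q g})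
    (hW : ∀ (q : G → ℝ), (∀ g, 0 < q g) → ∀ lam : ℝ, 0 ≤ lam →
      W (fun g => q g + lam) ≤ W q) :
    ∃ cstar : G → ℝ, (∀ g, 0 ≤ cstar g) ∧
      (∑ g, cstar g * d g = C0 - C τstar) ∧
      ∀ τ : T, C τ ≤ C0 → ∀ c : G → ℝ, (∀ g, 0 ≤ c g) →
        (∑ g, c g * d g = C0 - C τ) →
        W (fun g => qtilde g + β * cstar g) ≤ W (fun g => qtilde g + β * c g) := by
  set S : ℝ := C0 - C τstar with hS
  have hS0 : 0 ≤ S := by simp [hS]; linarith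
  set D : ℝ := ∑ g, d g with hD
  have hD0 : 0 < D := Finset.sum_pos (fun g _ => hd g) Finset.univ_nonempty
  -- the feasible set for τ*
  set K : Set (G → ℝ) := {c | (∀ g, 0 ≤ c g) ∧ ∑ g, c g * d g = S} with hK
  -- nonempty
  have hKne : K.Nonempty := by
    refine ⟨fun _ => S / D, fun g => div_nonneg hS0 hD0.le, ?_⟩
    rw [← Finset.mul_sum, ← hD, div_mul_cancel₀ _ hD0.ne']
  -- closed
  have hKclosed : IsClosed K := by
    have h1 : IsClosed {c : G → ℝ | ∀ g, 0 ≤ c g} := by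
      have : {c : G → ℝ | ∀ g, 0 ≤ c g} = ⋂ g, {c : G → ℝ | 0 ≤ c g} := by
        ext c; simp
      rw [this]
      exact isClosed_iInter fun g =>
        isClosed_le continuous_const (continuous_apply g)
    have h2 : IsClosed {c : G → ℝ | ∑ g, c g * d g = S} :=
      isClosed_eq (by continuity) continuous_const
    exact h1.inter h2
  -- bounded
  obtain ⟨g0, hg0⟩ : ∃ g0 : G, ∀ g, d g0 ≤ d g :=
    Finite.exists_min d
  have hKbdd : Bornology.IsBounded K := by
    rw [Metric.isBounded_iff_subset_closedBall 0]
    refine ⟨S / d g0, fun c hc => ?_⟩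
    rw [Metric.mem_closedBall, dist_zero_right, pi_norm_le_iff_of_nonneg
      (div_nonneg hS0 (hd g0).le)]
    intro g
    rw [Real.norm_eq_abs, abs_of_nonneg (hc.1 g)]
    have hle : c g * d g ≤ S := by
      rw [← hc.2]
      exact Finset.single_le_sum (f := fun g => c g * d g)
        (fun i _ => mul_nonneg (hc.1 i) (hd i).le) (Finset.mem_univ g)
    have h1 : c g * d g0 ≤ c g * d g := mul_le_mul_of_nonneg_left (hg0 g) (hc.1 g)
    rw [le_div_iff₀ (hd g0)]
    linarith
  have hKcompact : IsCompact K := Metric.isCompact_of_isClosed_isBounded hKclosed hKbdd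
  -- continuity of objective on K
  have hmap : ∀ c ∈ K, (fun g => qtilde g + β * c g) ∈ {q : G → ℝ | ∀ g, 0 < q g} := by
    intro c hc g
    exact add_pos_of_pos_of_nonneg (hqt g) (mul_nonneg hβ.le (hc.1 g))
  have hfc : ContinuousOn (fun c : G → ℝ => W (fun g => qtilde g + β * c g)) K := by
    apply hWcont.comp (f := fun c : G → ℝ => fun g => qtilde g + β * c g)
    · exact Continuous.continuousOn (by continuity)
    · exact hmap
  obtain ⟨cstar, hcstarK, hmin⟩ := hKcompact.exists_isMinOn hKne hfc
  refine ⟨cstar, hcstarK.1, hcstarK.2, ?_⟩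
  intro τ hτ c hc hcsum
  set lam : ℝ := (C τ - C τstar) / D with hlam
  have hlam0 : 0 ≤ lam := div_nonneg (by linarith [hstar τ]) hD0.le
  have hc'K : (fun g => c g + lam) ∈ K := by
    constructor
    · intro g; exact add_nonneg (hc g) hlam0
    · have : ∑ g, (c g + lam) * d g = (∑ g, c g * d g) + lam * D := by
        rw [hD, Finset.mul_sum, ← Finset.sum_add_distrib]
        congr 1; ext g; ring
      rw [this, hcsum, hlam, div_mul_cancel₀ _ hD0.ne']
      ring
  have h1 : W (fun g => qtilde g + β * cstar g) ≤
      W (fun g => qtilde g + β * (c g + lam)) := hmin hc'K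
  have h2 : W (fun g => qtilde g + β * (c g + lam)) ≤
      W (fun g => qtilde g + β * c g) := by
    have := hW (fun g => qtilde g + β * c g)
      (fun g => add_pos_of_pos_of_nonneg (hqt g) (mul_nonneg hβ.le (hc g)))
      (β * lam) (mul_nonneg hβ.le hlam0)
    convert this using 2
    ext g; ring
  linarith
end
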